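/- arXiv:1009.0696 — 3 statements merged into one kernel-verified Lean document; each statement's English description precedes it below -/
import Mathlib

section
/- Let g = R ⋉ n be a semidirect product Lie algebra over a field 𝕂 of characteristic 0, where n is an ideal. Define i : C^q(n,n)^R → C^q(g,g) by i(f)|_{n^q} = f and i(f)(x₁,…,x_q) = 0 whenever some argument lies in R (relative to the decomposition g = R ⊕ n). Then for all R-invariant cochains f and h on n with values in n, one has i([f,h]) = [i(f), i(h)] for the Nijenhuis–Richardson bracket, and i(d_{φ₀} f) = d_{φ} i(f), where φ₀ is the bracket of n and φ is the bracket of g. -/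
open scoped BigOperators

section Defs

variable {𝕂 L : Type*} [Field 𝕂] [LieRing L] [LieAlgebra 𝕂 L]

/-- Pair term of the Chevalley–Eilenberg differential (raw version). -/
def pairArgR {L : Type*} [LieRing L] :
    ∀ {k : ℕ}, ((Fin k → L) → L) → (Fin (k + 1) → L) → Fin (k + 1) → Fin (k + 1) → L
  | 0, _, _, _, _ => 0
  | (k + 1), f, x, i, j =>
    if h : (i : ℕ) < (j : ℕ) then
      f (Fin.cons ⁅x i, x j⁆
        (fun l => x (j.succAbove
          ((⟨(i : ℕ), by have := j.isLt; omega⟩ : Fin (k + 1)).succAbove l))))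
    else 0

/-- The Chevalley–Eilenberg differential with adjoint coefficients (raw version). -/
def ceD {L : Type*} [LieRing L] {k : ℕ} (f : (Fin k → L) → L) : (Fin (k + 1) → L) → L :=
  fun x =>
    (∑ i : Fin (k + 1), ((-1 : ℤ) ^ (i : ℕ)) • ⁅x i, f (x ∘ i.succAbove)⁆)
      + ∑ j : Fin (k + 1), ∑ i ∈ Finset.Iio j,
          ((-1 : ℤ) ^ ((i : ℕ) + (j : ℕ))) • pairArgR f x i j

/-- The Nijenhuis–Richardson insertion product `f • h` of a `(p+1)`-cochain and a
`(q+1)`-cochain (symmetrized form, valid in characteristic zero on alternating maps). -/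
noncomputable def nrComp (𝕂 : Type*) {L : Type*} [Field 𝕂] [LieRing L] [LieAlgebra 𝕂 L]
    (p q : ℕ) (f : (Fin (p + 1) → L) → L) (h : (Fin (q + 1) → L) → L) :
    (Fin (p + q + 1) → L) → L := fun x =>
  ((p.factorial * (q + 1).factorial : ℕ) : 𝕂)⁻¹ •
    ∑ σ : Equiv.Perm (Fin (p + q + 1)),
      ((Equiv.Perm.sign σ : ℤ)) •
        f (Fin.cons
            (h (fun i : Fin (q + 1) => x (σ (Fin.cast (by omega) (Fin.castAdd p i)))))
            (fun i : Fin p => x (σ (Fin.cast (by omega) (Fin.natAdd (q + 1) i)))))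

/-- The Nijenhuis–Richardson graded bracket `[f, h] = f•h − (−1)^{pq} h•f`. -/
noncomputable def nrBr (𝕂 : Type*) {L : Type*} [Field 𝕂] [LieRing L] [LieAlgebra 𝕂 L]
    (p q : ℕ) (f : (Fin (p + 1) → L) → L) (h : (Fin (q + 1) → L) → L) :
    (Fin (p + q + 1) → L) → L := fun x =>
  nrComp 𝕂 p q f h x -
    ((-1 : ℤ) ^ (p * q)) • nrComp 𝕂 q p h f (fun i => x (Fin.cast (by omega) i))

end Defs

/-- Extension by zero `i(F)` of a cochain `F` on `n` to a cochain on `g`, via the projection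
`π : g → n` along `R`. -/
def iFunR {𝕂 g : Type*} [Field 𝕂] [LieRing g] [LieAlgebra 𝕂 g]
    (n : LieSubalgebra 𝕂 g) (π : g →ₗ[𝕂] n) {k : ℕ}
    (F : (Fin k → n) → n) : (Fin k → g) → g := fun x => (F (fun j => π (x j)) : g)

/-- `R`-invariance of a cochain on `n`. -/
def RInvt {𝕂 g : Type*} [Field 𝕂] [LieRing g] [LieAlgebra 𝕂 g]
    (R n : LieSubalgebra 𝕂 g) (hid : ∀ x : g, ∀ y ∈ n, ⁅x, y⁆ ∈ n) {k : ℕ}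
    (f : AlternatingMap 𝕂 n n (Fin k)) : Prop :=
  ∀ r ∈ R, ∀ x : Fin k → n,
    ⁅r, (f x : g)⁆ =
      ∑ i : Fin k, (f (Function.update x i ⟨⁅r, (x i : g)⁆, hid r (x i) (x i).2⟩) : g)

/-!
Write every argument as `x = r + y` with `r ∈ R` and `y = π x ∈ n`. Since `R` is a subalgebra,
`π ⁅r + y, r' + y'⁆ = ⁅y, y'⁆ + ⁅r, y'⁆ - ⁅r', y⁆`, so `d i(f)` differs from `i(d f)` exactly by
the terms in which some `r i` acts: the brackets `(-1)^i ⁅r i, f(…)⁆` and the pair terms with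
`⁅r i, y j⁆` in front. `R`-invariance expands each bracket `⁅r i, f(…)⁆` into a sum of terms of
the second kind, and the two families cancel in pairs. The statement about the
Nijenhuis–Richardson bracket is formal, since `i(F) = F ∘ π` and `π` is the identity on `n`.
-/

namespace Fin

/-- For `i ≠ j`, the increasing enumeration of the complement of `{i, j}`. -/
def succAbovePair {n : ℕ} (i j : Fin (n + 2)) (m : Fin n) : Fin (n + 2) :=
  ⟨if m < min (i : ℕ) j then m else if m + 1 < max (i : ℕ) j then m + 1 else m + 2, by
    split_ifs <;> omega⟩

theorem succAbovePair_comm {n : ℕ} (i j : Fin (n + 2)) :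
    succAbovePair i j = succAbovePair j i := by
  ext m
  simp [succAbovePair, min_comm, max_comm]

theorem val_succAbove {n : ℕ} (p : Fin (n + 1)) (i : Fin n) :
    (p.succAbove i : ℕ) = if (i : ℕ) < p then (i : ℕ) else (i : ℕ) + 1 := by
  simp only [succAbove, lt_def, val_castSucc]
  split_ifs <;> rfl

theorem succAbove_succAbove_eq_succAbovePair {n : ℕ} (i : Fin (n + 2)) (l : Fin (n + 1))
    (m : Fin n) : i.succAbove (l.succAbove m) = succAbovePair i (i.succAbove l) m := by
  ext
  simp only [succAbovePair, val_succAbove]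
  split_ifs <;> omega

theorem succAbove_succAbove_eq_succAbovePair_of_lt {n : ℕ} {i j : Fin (n + 2)} (hij : i < j)
    (hi : (i : ℕ) < n + 1) (m : Fin n) :
    j.succAbove ((⟨i, hi⟩ : Fin (n + 1)).succAbove m) = succAbovePair i j m := by
  rw [lt_def] at hij
  ext
  simp only [succAbovePair, val_succAbove]
  split_ifs <;> omega

theorem neg_one_pow_mul_neg_one_pow_eq_succAbove {R : Type*} [Monoid R] [HasDistribNeg R] {n : ℕ}
    (i : Fin (n + 1)) (l : Fin n) :
    (-1 : R) ^ (i : ℕ) * (-1) ^ (l : ℕ) =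
      (if i < i.succAbove l then -1 else 1) * (-1) ^ ((i : ℕ) + i.succAbove l) := by
  simp only [lt_def, val_succAbove]
  rcases lt_or_ge (l : ℕ) i with h | h
  · rw [if_pos h, if_neg h.not_gt, one_mul, pow_add]
  · rw [if_neg (show ¬(l : ℕ) < i by omega), if_pos (show (i : ℕ) < l + 1 by omega), pow_add,
      pow_succ, mul_neg_one, mul_neg, neg_mul, one_mul, neg_neg]

theorem sum_sum_succAbove_eq_sum_Iio_add {M : Type*} [AddCommMonoid M] {n : ℕ}
    (G : Fin (n + 1) → Fin (n + 1) → M) :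
    ∑ i, ∑ l, G i (i.succAbove l) = ∑ j, ∑ i ∈ Finset.Iio j, (G i j + G j i) := by
  have hsplit : ∀ i, ∑ l, G i (i.succAbove l) =
      ∑ j ∈ Finset.Iio i, G i j + ∑ j ∈ Finset.Ioi i, G i j := by
    intro i
    have hrange : Finset.univ.map i.succAboveEmb = {i}ᶜ := by
      ext j
      simp [eq_comm (a := j), exists_succAbove_eq_iff]
    rw [← coe_succAboveEmb, ← Finset.sum_map Finset.univ i.succAboveEmb (G i), hrange,
      ← Finset.Ioi_disjUnion_Iio, Finset.sum_disjUnion, add_comm]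
  rw [Finset.sum_congr rfl fun i _ => hsplit i, Finset.sum_add_distrib, add_comm,
    Finset.sum_comm' (s' := fun j => Finset.Iio j) (t' := Finset.univ) (by simp),
    ← Finset.sum_add_distrib]
  simp only [Finset.sum_add_distrib]

end Fin

theorem pairArgR_of_lt {L : Type*} [LieRing L] {k : ℕ} (F : (Fin (k + 1) → L) → L)
    (x : Fin (k + 2) → L) {i j : Fin (k + 2)} (hij : i < j) :
    pairArgR F x i j = F (Fin.cons ⁅x i, x j⁆ (x ∘ Fin.succAbovePair i j)) := by
  rw [pairArgR, dif_pos (show (i : ℕ) < j from hij)]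
  congr 2
  funext m
  exact congrArg x (Fin.succAbove_succAbove_eq_succAbovePair_of_lt hij _ m)

section Semidirect

variable {𝕂 g : Type*} [Field 𝕂] [LieRing g] [LieAlgebra 𝕂 g]

theorem iFunR_cons (n : LieSubalgebra 𝕂 g) (π : g →ₗ[𝕂] n) {k : ℕ} (F : (Fin (k + 1) → n) → n)
    (c : g) (v : Fin k → g) :
    iFunR n π F (Fin.cons c v) = F (Fin.cons (π c) (fun j => π (v j))) := by
  refine congrArg (fun w => (F w : g)) (funext fun j => ?_)
  cases j using Fin.cases <;> rfl

theorem iFunR_nrComp (n : LieSubalgebra 𝕂 g) (π : g →ₗ[𝕂] n) (hπn : ∀ y : n, π (y : g) = y)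
    (a b : ℕ) (F : (Fin (a + 1) → n) → n) (H : (Fin (b + 1) → n) → n) (x : Fin (a + b + 1) → g) :
    nrComp 𝕂 a b (iFunR n π F) (iFunR n π H) x = iFunR n π (nrComp 𝕂 a b F H) x := by
  simp only [nrComp, iFunR_cons]
  simp only [iFunR, hπn, nrComp]
  push_cast
  rfl

theorem iFunR_nrBr (n : LieSubalgebra 𝕂 g) (π : g →ₗ[𝕂] n) (hπn : ∀ y : n, π (y : g) = y)
    (a b : ℕ) (F : (Fin (a + 1) → n) → n) (H : (Fin (b + 1) → n) → n) (x : Fin (a + b + 1) → g) :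
    nrBr 𝕂 a b (iFunR n π F) (iFunR n π H) x = iFunR n π (nrBr 𝕂 a b F H) x := by
  simp only [nrBr, iFunR_nrComp n π hπn]
  rfl

theorem sub_proj_mem_of_isCompl {R n : LieSubalgebra 𝕂 g}
    (hcompl : IsCompl R.toSubmodule n.toSubmodule) {π : g →ₗ[𝕂] n}
    (hπn : ∀ y : n, π (y : g) = y) (hπR : ∀ r ∈ R, π r = 0) (z : g) : z - π z ∈ R := by
  obtain ⟨a, b, ha, hb, rfl⟩ := Submodule.codisjoint_iff_exists_add_eq.mp hcompl.codisjoint z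
  rw [map_add, hπR a ha, zero_add, hπn ⟨b, hb⟩, add_sub_cancel_right]
  exact ha

def adIdeal (n : LieSubalgebra 𝕂 g) (hid : ∀ x : g, ∀ y ∈ n, ⁅x, y⁆ ∈ n) (a : g) (u : n) : n :=
  ⟨⁅a, (u : g)⁆, hid a u u.2⟩

theorem proj_lie_add {R n : LieSubalgebra 𝕂 g} (hid : ∀ x : g, ∀ y ∈ n, ⁅x, y⁆ ∈ n)
    {π : g →ₗ[𝕂] n} (hπn : ∀ y : n, π (y : g) = y) (hπR : ∀ r ∈ R, π r = 0)
    {r r' : g} (hr : r ∈ R) (hr' : r' ∈ R) (y y' : n) :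
    π ⁅r + y, r' + y'⁆ = ⁅y, y'⁆ + adIdeal n hid r y' - adIdeal n hid r' y := by
  have hsplit : ⁅r + y, r' + y'⁆ =
      ⁅r, r'⁆ + ((⁅y, y'⁆ + adIdeal n hid r y' - adIdeal n hid r' y : n) : g) := by
    simp only [adIdeal, AddSubgroupClass.coe_sub, AddMemClass.coe_add, LieSubalgebra.coe_bracket,
      add_lie, lie_add, ← lie_skew (y : g) r']
    abel
  rw [hsplit, map_add, hπR _ (R.lie_mem hr hr'), hπn, zero_add]

theorem RInvt.lie_apply_eq_sum {R n : LieSubalgebra 𝕂 g} {hid : ∀ x : g, ∀ y ∈ n, ⁅x, y⁆ ∈ n}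
    {k : ℕ} {f : AlternatingMap 𝕂 n n (Fin (k + 1))} (hf : RInvt R n hid f) {r : g} (hr : r ∈ R)
    (v : Fin (k + 1) → n) :
    ⁅r, (f v : g)⁆ =
      ∑ l : Fin (k + 1),
        ((-1 : ℤ) ^ (l : ℕ)) • (f (Fin.cons (adIdeal n hid r (v l)) (v ∘ l.succAbove)) : g) := by
  rw [hf r hr v]
  refine Finset.sum_congr rfl fun l _ => ?_
  rw [← Fin.insertNth_removeNth, AlternatingMap.map_insertNth]
  push_cast
  rfl

/-- The terms of `d i(f)` at `r + y` in which some `r i` occurs. -/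
def ceDRPart (n : LieSubalgebra 𝕂 g) (hid : ∀ x : g, ∀ y ∈ n, ⁅x, y⁆ ∈ n) {p : ℕ}
    (f : AlternatingMap 𝕂 n n (Fin (p + 1))) (r : Fin (p + 2) → g) (y : Fin (p + 2) → n) : g :=
  (∑ i : Fin (p + 2), ((-1 : ℤ) ^ (i : ℕ)) • ⁅r i, (f (y ∘ i.succAbove) : g)⁆) +
    ∑ j : Fin (p + 2), ∑ i ∈ Finset.Iio j, ((-1 : ℤ) ^ ((i : ℕ) + j)) •
      ((f (Fin.cons (adIdeal n hid (r i) (y j)) (y ∘ Fin.succAbovePair i j)) : g) -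
        f (Fin.cons (adIdeal n hid (r j) (y i)) (y ∘ Fin.succAbovePair i j)))

theorem ceD_iFunR_add {R n : LieSubalgebra 𝕂 g} (hid : ∀ x : g, ∀ y ∈ n, ⁅x, y⁆ ∈ n)
    {π : g →ₗ[𝕂] n} (hπn : ∀ y : n, π (y : g) = y) (hπR : ∀ r ∈ R, π r = 0) {p : ℕ}
    (f : AlternatingMap 𝕂 n n (Fin (p + 1))) {r : Fin (p + 2) → g} (hr : ∀ k, r k ∈ R)
    (y : Fin (p + 2) → n) :
    ceD (iFunR n π f) (fun k => r k + y k) = ((ceD (⇑f) y : n) : g) + ceDRPart n hid f r y := by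
  have hπ : ∀ k, π (r k + y k) = y k := fun k => by rw [map_add, hπR _ (hr k), hπn, zero_add]
  have hpair : ∀ j, ∀ i ∈ Finset.Iio j, pairArgR (iFunR n π f) (fun k => r k + y k) i j =
      ((pairArgR (⇑f) y i j : n) : g) +
        ((f (Fin.cons (adIdeal n hid (r i) (y j)) (y ∘ Fin.succAbovePair i j)) : g) -
          f (Fin.cons (adIdeal n hid (r j) (y i)) (y ∘ Fin.succAbovePair i j))) := by
    intro j i hi
    have hij : i < j := Finset.mem_Iio.mp hi
    have hrest : (fun m => π (((fun k => r k + (y k : g)) ∘ Fin.succAbovePair i j) m)) =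
        y ∘ Fin.succAbovePair i j := funext fun m => hπ _
    rw [pairArgR_of_lt _ _ hij, pairArgR_of_lt _ _ hij, iFunR_cons,
      proj_lie_add hid hπn hπR (hr i) (hr j), hrest, ← Fin.update_cons_zero 0,
      AlternatingMap.map_update_sub, AlternatingMap.map_update_add, Fin.update_cons_zero,
      Fin.update_cons_zero, Fin.update_cons_zero]
    push_cast
    abel
  have hfirst : ∀ i : Fin (p + 2),
      iFunR n π f ((fun k => r k + (y k : g)) ∘ i.succAbove) = f (y ∘ i.succAbove) :=
    fun i => congrArg _ (congrArg f (funext fun m => hπ _))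
  rw [ceD, Finset.sum_congr rfl fun j _ => Finset.sum_congr rfl fun i hi => by rw [hpair j i hi]]
  simp only [hfirst, add_lie, smul_add, Finset.sum_add_distrib, ceD, ceDRPart]
  push_cast
  abel

theorem ceDRPart_eq_zero {R n : LieSubalgebra 𝕂 g} {hid : ∀ x : g, ∀ y ∈ n, ⁅x, y⁆ ∈ n} {p : ℕ}
    {f : AlternatingMap 𝕂 n n (Fin (p + 1))} (hf : RInvt R n hid f) {r : Fin (p + 2) → g}
    (hr : ∀ k, r k ∈ R) (y : Fin (p + 2) → n) : ceDRPart n hid f r y = 0 := by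
  set T : Fin (p + 2) → Fin (p + 2) → g := fun i j =>
    f (Fin.cons (adIdeal n hid (r i) (y j)) (y ∘ Fin.succAbovePair i j))
  set G : Fin (p + 2) → Fin (p + 2) → g := fun i j =>
    ((if i < j then -1 else 1) * (-1 : ℤ) ^ ((i : ℕ) + j)) • T i j
  have hbracket : ∀ i : Fin (p + 2), ((-1 : ℤ) ^ (i : ℕ)) • ⁅r i, (f (y ∘ i.succAbove) : g)⁆ =
      ∑ l, G i (i.succAbove l) := by
    intro i
    rw [hf.lie_apply_eq_sum (hr i), Finset.smul_sum]
    refine Finset.sum_congr rfl fun l _ => ?_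
    rw [smul_smul, Fin.neg_one_pow_mul_neg_one_pow_eq_succAbove]
    congr 3
    exact congrArg _ (funext fun m => congrArg y (Fin.succAbove_succAbove_eq_succAbovePair i l m))
  rw [ceDRPart, Finset.sum_congr rfl fun i _ => hbracket i, Fin.sum_sum_succAbove_eq_sum_Iio_add,
    ← Finset.sum_add_distrib]
  refine Finset.sum_eq_zero fun j _ => ?_
  rw [← Finset.sum_add_distrib]
  refine Finset.sum_eq_zero fun i hi => ?_
  have hij : i < j := Finset.mem_Iio.mp hi
  simp only [G, T, if_pos hij, if_neg hij.not_gt, Fin.succAbovePair_comm j i, add_comm (j : ℕ)]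
  module

end Semidirect

theorem iMap_commutes_with_NR_bracket_and_differential_general
    {𝕂 g : Type*} [Field 𝕂] [LieRing g] [LieAlgebra 𝕂 g]
    (R n : LieSubalgebra 𝕂 g)
    (hid : ∀ x : g, ∀ y ∈ n, ⁅x, y⁆ ∈ n)
    (hcompl : IsCompl R.toSubmodule n.toSubmodule)
    (π : g →ₗ[𝕂] n)
    (hπn : ∀ y : n, π (y : g) = y)
    (hπR : ∀ r ∈ R, π r = 0)
    (p q : ℕ)
    (f : AlternatingMap 𝕂 n n (Fin (p + 1)))
    (h : AlternatingMap 𝕂 n n (Fin (q + 1)))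
    (hf : RInvt R n hid f) :
    (∀ x : Fin (p + q + 1) → g,
        nrBr 𝕂 p q (iFunR n π ⇑f) (iFunR n π ⇑h) x =
          iFunR n π (nrBr 𝕂 p q ⇑f ⇑h) x) ∧
    (∀ x : Fin (p + 2) → g,
        ceD (iFunR n π ⇑f) x = iFunR n π (ceD ⇑f) x) := by
  refine ⟨iFunR_nrBr n π hπn p q f h, fun x => ?_⟩
  have hr : ∀ k, x k - π (x k) ∈ R := fun k => sub_proj_mem_of_isCompl hcompl hπn hπR (x k)
  calc ceD (iFunR n π f) x
      = ceD (iFunR n π f) (fun k => (x k - π (x k)) + (π (x k) : g)) := by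
        simp_rw [sub_add_cancel]
    _ = ((ceD (⇑f) (fun k => π (x k)) : n) : g) + ceDRPart n hid f _ _ :=
        ceD_iFunR_add hid hπn hπR f hr _
    _ = iFunR n π (ceD ⇑f) x := by rw [ceDRPart_eq_zero hf hr, add_zero]; rfl

/-- For a semidirect product `g = R ⋉ n` (with `n` an ideal, `R` a complement
and `π : g → n` the projection along `R`), the extension-by-zero map `i` on `R`-invariant
cochains commutes with the Nijenhuis–Richardson bracket and with the Chevalley–Eilenberg
differentials: `i([f,h]) = [i(f), i(h)]` and `i(d_{φ₀} f) = d_φ i(f)`. -/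
theorem iMap_commutes_with_NR_bracket_and_differential
    {𝕂 g : Type*} [Field 𝕂] [CharZero 𝕂] [LieRing g] [LieAlgebra 𝕂 g]
    (R n : LieSubalgebra 𝕂 g)
    (hid : ∀ x : g, ∀ y ∈ n, ⁅x, y⁆ ∈ n)
    (hcompl : IsCompl R.toSubmodule n.toSubmodule)
    (π : g →ₗ[𝕂] n)
    (hπn : ∀ y : n, π (y : g) = y)
    (hπR : ∀ r ∈ R, π r = 0)
    (p q : ℕ)
    (f : AlternatingMap 𝕂 n n (Fin (p + 1)))
    (h : AlternatingMap 𝕂 n n (Fin (q + 1)))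
    (hf : RInvt R n hid f) (hh : RInvt R n hid h) :
    (∀ x : Fin (p + q + 1) → g,
        nrBr 𝕂 p q (iFunR n π ⇑f) (iFunR n π ⇑h) x =
          iFunR n π (nrBr 𝕂 p q ⇑f ⇑h) x) ∧
    (∀ x : Fin (p + 2) → g,
        ceD (iFunR n π ⇑f) x = iFunR n π (ceD ⇑f) x) :=
  iMap_commutes_with_NR_bracket_and_differential_general R n hid hcompl π hπn hπR p q f h hf
end

section
/- Let n be a finite-dimensional nilpotent Lie algebra with bracket φ, T a torus of derivations of n, a a one-dimensional central T-stable ideal with weight β, and b a T-stable complement of a in n, so that φ = φ₀ + ψ with φ₀ the bracket induced on n/a (transported to b) and ψ ∈ Z^2(n/a, a)^T. If T has no zero weight on n/a, then the weight space (ker φ̃)_β of the induced map φ̃ : Λ²n → n equals (ker φ̃₀)_β ∩ (ker ψ̃)_β, where φ̃₀ and ψ̃ are the maps Λ²(n/a) → n/a and Λ²(n/a) → a induced by φ₀ and ψ. -/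
/-! Statement 11: the `β`-weight space of `ker(φ̃ : Λ²n → n)` is
`(ker φ̃₀)_β ∩ (ker ψ̃)_β` when the torus has no zero weight on `n/a ≅ b`. -/

open scoped BigOperators

set_option synthInstance.maxHeartbeats 1000000
set_option maxSynthPendingDepth 3
set_option maxHeartbeats 1000000

/-- The wedge `x ∧ y` as an element of the second exterior power `⋀[𝕂]^2 M`. -/
def wedge2 (𝕂 : Type*) {M : Type*} [CommRing 𝕂] [AddCommGroup M] [Module 𝕂 M]
    (x y : M) : ↥(⋀[𝕂]^2 M) :=
  ⟨ExteriorAlgebra.ιMulti 𝕂 2 ![x, y],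
    ExteriorAlgebra.ιMulti_range 𝕂 2 (Set.mem_range_self _)⟩

/-! If `e` spans `a`, then `⋀²n = ⋀²b ⊕ e ∧ b`, and the torus acts on `e ∧ u` with weight `β` plus
the weight of `u`. As `b` has no zero weight, the `β`-weight space of `⋀²n` therefore lies in
`⋀²b`. There `φ̃ = φ̃₀ + ψ̃` with `φ̃₀` and `ψ̃` taking values in the complementary subspaces `b`
and `a`, so `φ̃` vanishes exactly where both of them do. -/

open Module exteriorPower

section Wedge2

variable {R M N : Type*} [CommRing R] [AddCommGroup M] [Module R M] [AddCommGroup N] [Module R N]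

lemma wedge2_eq_ιMulti (x y : M) : wedge2 R x y = ιMulti R 2 ![x, y] := rfl

lemma coe_wedge2 (x y : M) :
    (wedge2 R x y : ExteriorAlgebra R M) = ExteriorAlgebra.ι R x * ExteriorAlgebra.ι R y := by
  simp [wedge2_eq_ιMulti, ExteriorAlgebra.ιMulti_apply]

lemma wedge2_add_left (x x' y : M) : wedge2 R (x + x') y = wedge2 R x y + wedge2 R x' y :=
  Subtype.ext <| by simp [coe_wedge2, add_mul]

lemma wedge2_add_right (x y y' : M) : wedge2 R x (y + y') = wedge2 R x y + wedge2 R x y' :=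
  Subtype.ext <| by simp [coe_wedge2, mul_add]

lemma wedge2_smul_left (r : R) (x y : M) : wedge2 R (r • x) y = r • wedge2 R x y :=
  Subtype.ext <| by simp [coe_wedge2]

lemma wedge2_smul_right (r : R) (x y : M) : wedge2 R x (r • y) = r • wedge2 R x y :=
  Subtype.ext <| by simp [coe_wedge2]

lemma wedge2_self (x : M) : wedge2 R x x = 0 :=
  Subtype.ext <| by simp [coe_wedge2]

lemma wedge2_swap (x y : M) : wedge2 R y x = -wedge2 R x y :=
  Subtype.ext <| by
    rw [Submodule.coe_neg, coe_wedge2, coe_wedge2, eq_neg_iff_add_eq_zero, add_comm]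
    exact ExteriorAlgebra.ι_add_mul_swap x y

variable (R) in
noncomputable def wedge2ₗ : M →ₗ[R] M →ₗ[R] ⋀[R]^2 M :=
  LinearMap.mk₂ R (wedge2 R) wedge2_add_left wedge2_smul_left wedge2_add_right wedge2_smul_right

@[simp]
lemma wedge2ₗ_apply (x y : M) : wedge2ₗ R x y = wedge2 R x y := rfl

lemma wedge2_ext {f g : ⋀[R]^2 M →ₗ[R] N} (h : ∀ x y : M, f (wedge2 R x y) = g (wedge2 R x y)) :
    f = g := by
  refine linearMap_ext (AlternatingMap.ext fun v => ?_)
  have hv : v = ![v 0, v 1] := funext fun i => by fin_cases i <;> rfl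
  rw [LinearMap.compAlternatingMap_apply, LinearMap.compAlternatingMap_apply, hv]
  exact h (v 0) (v 1)

lemma map_wedge2 (f : M →ₗ[R] N) (x y : M) :
    map 2 f (wedge2 R x y) = wedge2 R (f x) (f y) := by
  rw [wedge2_eq_ιMulti, wedge2_eq_ιMulti, map_apply_ιMulti]
  congr 1
  ext i; fin_cases i <;> rfl

noncomputable def wedge2Lift (m : M →ₗ[R] M →ₗ[R] N) (hm : ∀ x, m x x = 0) :
    ⋀[R]^2 M →ₗ[R] N :=
  alternatingMapLinearEquiv
    { toFun := fun v => m (v 0) (v 1)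
      map_update_add' := fun v i x y => by fin_cases i <;> simp [Function.update]
      map_update_smul' := fun v i r x => by fin_cases i <;> simp [Function.update]
      map_eq_zero_of_eq' := fun v i j hv hij => by
        have h01 : v 0 = v 1 := by
          fin_cases i <;> fin_cases j <;> first | exact hv | exact hv.symm | exact absurd rfl hij
        simp only [h01, hm] }

lemma wedge2Lift_wedge2 (m : M →ₗ[R] M →ₗ[R] N) (hm : ∀ x, m x x = 0) (x y : M) :
    wedge2Lift m hm (wedge2 R x y) = m x y := by
  rw [wedge2Lift, wedge2_eq_ιMulti, alternatingMapLinearEquiv_apply_ιMulti]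
  rfl

noncomputable def wedge2Contract (c : Dual R M) : ⋀[R]^2 M →ₗ[R] M :=
  wedge2Lift
    (LinearMap.mk₂ R (fun x y => c x • y - c y • x)
      (fun x x' y => by simp only [map_add]; module)
      (fun r x y => by simp only [map_smul, smul_eq_mul]; module)
      (fun x y y' => by simp only [map_add]; module)
      (fun r x y => by simp only [map_smul, smul_eq_mul]; module))
    fun x => sub_self _

lemma wedge2Contract_wedge2 (c : Dual R M) (x y : M) :
    wedge2Contract c (wedge2 R x y) = c x • y - c y • x :=
  wedge2Lift_wedge2 _ _ x y

/-- Splitting `M = R e ⊕ range π` splits `⋀² M` as `⋀² (range π) ⊕ e ∧ range π`. -/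
lemma eq_map_add_wedge2_wedge2Contract {e : M} {c : Dual R M} {π : M →ₗ[R] M}
    (h : ∀ x, c x • e + π x = x) (w : ⋀[R]^2 M) :
    w = map 2 π w + wedge2 R e (π (wedge2Contract c w)) := by
  have key : LinearMap.id = map 2 π + wedge2ₗ R e ∘ₗ π ∘ₗ wedge2Contract c := by
    refine wedge2_ext fun x y => ?_
    simp only [LinearMap.id_apply, LinearMap.add_apply, LinearMap.comp_apply, map_wedge2,
      wedge2Contract_wedge2, wedge2ₗ_apply, map_sub, map_smul]
    conv_lhs => rw [← h x, ← h y]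
    simp only [wedge2_add_left, wedge2_add_right, wedge2_smul_left, wedge2_smul_right,
      wedge2_self, wedge2_swap (π x) e, smul_zero]
    module
  exact LinearMap.congr_fun key w

lemma apply_mem_eigenspace_of_comp_eq {f : M →ₗ[R] N} {D : End R M} {D' : End R N}
    (h : f ∘ₗ D = D' ∘ₗ f) {μ : R} {w : M} (hw : w ∈ End.eigenspace D μ) :
    f w ∈ End.eigenspace D' μ := by
  rw [End.mem_eigenspace_iff] at hw ⊢
  rw [← LinearMap.comp_apply D' f, ← h, LinearMap.comp_apply, hw, map_smul]

variable {δ : End R M} {D : End R (⋀[R]^2 M)}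

lemma map_comp_of_comp_eq (hD : ∀ x y, D (wedge2 R x y) = wedge2 R (δ x) y + wedge2 R x (δ y))
    {δ' : End R N} {D' : End R (⋀[R]^2 N)}
    (hD' : ∀ x y, D' (wedge2 R x y) = wedge2 R (δ' x) y + wedge2 R x (δ' y))
    {f : M →ₗ[R] N} (hf : f ∘ₗ δ = δ' ∘ₗ f) :
    map 2 f ∘ₗ D = D' ∘ₗ map 2 f := by
  refine wedge2_ext fun x y => ?_
  simp only [LinearMap.comp_apply, hD, hD', map_add, map_wedge2, ← LinearMap.comp_apply f δ, hf]

lemma wedge2Contract_comp (hD : ∀ x y, D (wedge2 R x y) = wedge2 R (δ x) y + wedge2 R x (δ y))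
    {c : Dual R M} {β : R} (hc : c ∘ₗ δ = β • c) :
    wedge2Contract c ∘ₗ D = β • wedge2Contract c + δ ∘ₗ wedge2Contract c := by
  refine wedge2_ext fun x y => ?_
  simp only [LinearMap.comp_apply, LinearMap.add_apply, LinearMap.smul_apply, hD, map_add,
    wedge2Contract_wedge2, ← LinearMap.comp_apply c δ, hc, map_sub, map_smul, smul_eq_mul]
  module

end Wedge2

section Complement

variable {R V : Type*} [Ring R] [AddCommGroup V] [Module R V] {a b : Submodule R V}

lemma coe_proj_add_coe_proj (hcompl : IsCompl a b) {prA : V →ₗ[R] a} {prB : V →ₗ[R] b}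
    (hprA1 : ∀ y : a, prA y = y) (hprA0 : ∀ u ∈ b, prA u = 0)
    (hprB1 : ∀ u : b, prB u = u) (hprB0 : ∀ y ∈ a, prB y = 0) (x : V) :
    (prA x : V) + prB x = x := by
  obtain ⟨y, hy, u, hu, rfl⟩ :=
    Submodule.mem_sup.1 (hcompl.sup_eq_top ▸ Submodule.mem_top (x := x))
  rw [map_add, map_add, hprA0 u hu, hprB0 y hy, add_zero, zero_add, hprA1 ⟨y, hy⟩, hprB1 ⟨u, hu⟩]

lemma proj_comp_of_mapsTo {prA : V →ₗ[R] a} {prB : V →ₗ[R] b}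
    (hsum : ∀ x, (prA x : V) + prB x = x) (hprB1 : ∀ u : b, prB u = u)
    (hprB0 : ∀ y ∈ a, prB y = 0) {f : End R V} (hfa : ∀ y ∈ a, f y ∈ a) (hfb : ∀ u ∈ b, f u ∈ b) :
    prB ∘ₗ f = f.restrict hfb ∘ₗ prB := by
  ext x
  conv_lhs => rw [LinearMap.comp_apply, ← hsum x]
  rw [map_add, map_add, hprB0 _ (hfa _ (prA x).2), zero_add, ← LinearMap.coe_restrict_apply hfb,
    hprB1, LinearMap.comp_apply]

lemma ker_subtype_comp_add_subtype_comp {X : Type*} [AddCommGroup X] [Module R X]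
    (hdisj : Disjoint a b) (g : X →ₗ[R] a) (h : X →ₗ[R] b) :
    LinearMap.ker (a.subtype ∘ₗ g + b.subtype ∘ₗ h) = LinearMap.ker g ⊓ LinearMap.ker h := by
  ext z
  simp only [Submodule.mem_inf, LinearMap.mem_ker, LinearMap.add_apply, LinearMap.comp_apply,
    Submodule.subtype_apply]
  refine ⟨fun hz => ?_, fun ⟨hg, hh⟩ => by simp [hg, hh]⟩
  have hg : (g z : V) = 0 := Submodule.disjoint_def.1 hdisj _ (g z).2 <| by
    rw [eq_neg_of_add_eq_zero_left hz]
    exact b.neg_mem (h z).2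
  rw [hg, zero_add] at hz
  exact ⟨Subtype.ext hg, Subtype.ext hz⟩

end Complement

lemma exists_dual_smul_eq_of_finrank_eq_one {K W : Type*} [Field K] [AddCommGroup W] [Module K W]
    (h : finrank K W = 1) : ∃ (e : W) (c : Dual K W), ∀ y, c y • e = y := by
  have : Module.Finite K W := Module.finite_of_finrank_eq_succ h
  let B := finBasisOfFinrankEq K W h
  exact ⟨B 0, B.coord 0, fun y => by simpa using B.sum_repr y⟩

theorem iInf_eigenspace_wedge2_eq_map {R V ι : Type*} [CommRing R] [AddCommGroup V] [Module R V]
    {δ : ι → End R V} {b : Submodule R V} (hbst : ∀ i, ∀ x ∈ b, δ i x ∈ b)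
    (hnozero : ∀ x ∈ b, (∀ i, δ i x = 0) → x = 0) {β : ι → R} {e : V} {c : Dual R V}
    {prB : V →ₗ[R] b} (hdec : ∀ x, c x • e + prB x = x) (hc : ∀ i, c ∘ₗ δ i = β i • c)
    (hprB : ∀ i, prB ∘ₗ δ i = (δ i).restrict (hbst i) ∘ₗ prB)
    {D2n : ι → End R (⋀[R]^2 V)}
    (hD2n : ∀ i, ∀ x y, D2n i (wedge2 R x y) = wedge2 R (δ i x) y + wedge2 R x (δ i y))
    {D2b : ι → End R (⋀[R]^2 b)}
    (hD2b : ∀ i, ∀ u v : b, D2b i (wedge2 R u v) =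
      wedge2 R ((δ i).restrict (hbst i) u) v + wedge2 R u ((δ i).restrict (hbst i) v)) :
    ⨅ i, End.eigenspace (D2n i) (β i) =
      (⨅ i, End.eigenspace (D2b i) (β i)).map (map 2 b.subtype) := by
  apply le_antisymm
  · intro w hw
    have hw' : ∀ i, D2n i w = β i • w := fun i =>
      End.mem_eigenspace_iff.1 ((Submodule.mem_iInf _).1 hw i)
    have hm : ∀ i, δ i (wedge2Contract c w) = 0 := fun i => by
      simpa [hw' i] using LinearMap.congr_fun (wedge2Contract_comp (hD2n i) (hc i)) w
    have hpm : prB (wedge2Contract c w) = 0 := Subtype.ext <| hnozero _ (prB _).2 fun i => by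
      rw [← LinearMap.coe_restrict_apply (hbst i), ← LinearMap.comp_apply, ← hprB i,
        LinearMap.comp_apply, hm i, map_zero, Submodule.coe_zero]
    refine ⟨map 2 prB w, (Submodule.mem_iInf _).2 fun i => apply_mem_eigenspace_of_comp_eq
      (map_comp_of_comp_eq (hD2n i) (hD2b i) (hprB i)) ((Submodule.mem_iInf _).1 hw i), ?_⟩
    have hsplit := eq_map_add_wedge2_wedge2Contract (π := b.subtype ∘ₗ prB) hdec w
    rw [LinearMap.comp_apply, hpm, map_zero, ← wedge2ₗ_apply, map_zero, add_zero, map_comp]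
      at hsplit
    exact hsplit.symm
  · rintro _ ⟨z, hz, rfl⟩
    exact (Submodule.mem_iInf _).2 fun i => apply_mem_eigenspace_of_comp_eq
      (map_comp_of_comp_eq (hD2b i) (hD2n i) rfl) ((Submodule.mem_iInf _).1 hz i)

theorem weight_space_ker_bracket_eq_general
    {𝕂 n : Type*} [Field 𝕂] [LieRing n] [LieAlgebra 𝕂 n] {ι : Type*}
    -- the torus `T`
    (δ : ι → Module.End 𝕂 n)
    -- the central one-dimensional `T`-stable ideal `a` of weight `β`
    (a : Submodule 𝕂 n)
    (hdim : Module.finrank 𝕂 ↥a = 1)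
    (hast : ∀ i, ∀ y ∈ a, δ i y ∈ a)
    (β : ι → 𝕂)
    (hweight : ∀ i, ∀ y ∈ a, δ i y = β i • y)
    -- the `T`-stable complement `b`, identified with `n/a`
    (b : Submodule 𝕂 n)
    (hcompl : IsCompl a b)
    (hbst : ∀ i, ∀ x ∈ b, δ i x ∈ b)
    -- `T` has no zero weight on `n/a ≅ b`
    (hnozero : ∀ x ∈ b, (∀ i, δ i x = 0) → x = 0)
    -- the projections onto `b` along `a` and onto `a` along `b`
    (prB : n →ₗ[𝕂] ↥b) (hprB1 : ∀ u : ↥b, prB (u : n) = u) (hprB0 : ∀ y ∈ a, prB y = 0)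
    (prA : n →ₗ[𝕂] ↥a) (hprA1 : ∀ y : ↥a, prA (y : n) = y) (hprA0 : ∀ u ∈ b, prA u = 0)
    -- the maps induced on exterior squares
    (φt : ↥(⋀[𝕂]^2 n) →ₗ[𝕂] n)
    (hφt : ∀ x y : n, φt (wedge2 𝕂 x y) = ⁅x, y⁆)
    (φ0t : ↥(⋀[𝕂]^2 ↥b) →ₗ[𝕂] ↥b)
    (hφ0t : ∀ u v : ↥b, φ0t (wedge2 𝕂 u v) = prB ⁅(u : n), (v : n)⁆)
    (ψt : ↥(⋀[𝕂]^2 ↥b) →ₗ[𝕂] ↥a)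
    (hψt : ∀ u v : ↥b, ψt (wedge2 𝕂 u v) = prA ⁅(u : n), (v : n)⁆)
    -- the canonical embedding `j : Λ²b → Λ²n`
    (j : ↥(⋀[𝕂]^2 ↥b) →ₗ[𝕂] ↥(⋀[𝕂]^2 n))
    (hj : ∀ u v : ↥b, j (wedge2 𝕂 u v) = wedge2 𝕂 (u : n) (v : n))
    -- the induced torus actions on the exterior squares
    (D2n : ι → Module.End 𝕂 ↥(⋀[𝕂]^2 n))
    (hD2n : ∀ i, ∀ x y : n,
      D2n i (wedge2 𝕂 x y) = wedge2 𝕂 (δ i x) y + wedge2 𝕂 x (δ i y))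
    (D2b : ι → Module.End 𝕂 ↥(⋀[𝕂]^2 ↥b))
    (hD2b : ∀ i, ∀ u v : ↥b,
      D2b i (wedge2 𝕂 u v) =
        wedge2 𝕂 ((δ i).restrict (hbst i) u) v + wedge2 𝕂 u ((δ i).restrict (hbst i) v)) :
    (⨅ i, Module.End.eigenspace (D2n i) (β i)) ⊓ LinearMap.ker φt =
      Submodule.map j
        ((⨅ i, Module.End.eigenspace (D2b i) (β i)) ⊓ LinearMap.ker φ0t ⊓
          LinearMap.ker ψt) := by
  have hsum := coe_proj_add_coe_proj hcompl hprA1 hprA0 hprB1 hprB0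
  have hprB (i) : prB ∘ₗ δ i = (δ i).restrict (hbst i) ∘ₗ prB :=
    proj_comp_of_mapsTo hsum hprB1 hprB0 (hast i) (hbst i)
  have hprA (i) : prA ∘ₗ δ i = β i • prA := by
    rw [proj_comp_of_mapsTo (fun x => (add_comm _ _).trans (hsum x)) hprA1 hprA0
      (hbst i) (hast i)]
    ext x
    exact hweight i _ (prA x).2
  obtain ⟨e, c, hec⟩ := exists_dual_smul_eq_of_finrank_eq_one hdim
  have hdec (x : n) : (c ∘ₗ prA) x • (e : n) + prB x = x := by
    conv_rhs => rw [← hsum x]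
    rw [LinearMap.comp_apply, ← Submodule.coe_smul, hec]
  have hc (i) : (c ∘ₗ prA) ∘ₗ δ i = β i • (c ∘ₗ prA) := by
    rw [LinearMap.comp_assoc, hprA i, LinearMap.comp_smul]
  obtain rfl : j = map 2 b.subtype := wedge2_ext fun u v => by rw [hj, map_wedge2]; rfl
  have hbracket : φt ∘ₗ map 2 b.subtype = b.subtype ∘ₗ φ0t + a.subtype ∘ₗ ψt :=
    wedge2_ext fun u v => by
      simp [map_wedge2, hφt, hφ0t, hψt, add_comm (prB _ : n), hsum]
  rw [iInf_eigenspace_wedge2_eq_map hbst hnozero hdec hc hprB hD2n hD2b,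
    Submodule.map_inf_eq_map_inf_comap, ← LinearMap.ker_comp, hbracket,
    ker_subtype_comp_add_subtype_comp hcompl.symm.disjoint, inf_assoc]

/-- Let `n` be a finite-dimensional nilpotent Lie algebra with bracket `φ`,
`T` a torus of derivations, `a` a one-dimensional central `T`-stable ideal of weight `β`, and
`b` a `T`-stable complement of `a`, so that `φ = φ₀ + ψ`.  If `T` has no zero weight on
`n/a ≅ b`, then `(ker φ̃)_β = (ker φ̃₀)_β ∩ (ker ψ̃)_β` (the right-hand side being viewed
inside `Λ²n` via the embedding `j : Λ²b → Λ²n`). -/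
theorem weight_space_ker_bracket_eq
    {𝕂 n : Type*} [Field 𝕂] [CharZero 𝕂] [LieRing n] [LieAlgebra 𝕂 n]
    [FiniteDimensional 𝕂 n] [LieRing.IsNilpotent n] {ι : Type*}
    -- the torus `T`
    (δ : ι → Module.End 𝕂 n)
    (hder : ∀ i, ∀ x y : n, δ i ⁅x, y⁆ = ⁅δ i x, y⁆ + ⁅x, δ i y⁆)
    (hcomm : ∀ i j, Commute (δ i) (δ j))
    (hss : ∀ i, (δ i).IsSemisimple)
    -- the central one-dimensional `T`-stable ideal `a` of weight `β`
    (a : Submodule 𝕂 n)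
    (hcentral : ∀ x : n, ∀ y ∈ a, ⁅x, y⁆ = 0)
    (hdim : Module.finrank 𝕂 ↥a = 1)
    (hast : ∀ i, ∀ y ∈ a, δ i y ∈ a)
    (β : ι → 𝕂)
    (hweight : ∀ i, ∀ y ∈ a, δ i y = β i • y)
    -- the `T`-stable complement `b`, identified with `n/a`
    (b : Submodule 𝕂 n)
    (hcompl : IsCompl a b)
    (hbst : ∀ i, ∀ x ∈ b, δ i x ∈ b)
    -- `T` has no zero weight on `n/a ≅ b`
    (hnozero : ∀ x ∈ b, (∀ i, δ i x = 0) → x = 0)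
    -- the projections onto `b` along `a` and onto `a` along `b`
    (prB : n →ₗ[𝕂] ↥b) (hprB1 : ∀ u : ↥b, prB (u : n) = u) (hprB0 : ∀ y ∈ a, prB y = 0)
    (prA : n →ₗ[𝕂] ↥a) (hprA1 : ∀ y : ↥a, prA (y : n) = y) (hprA0 : ∀ u ∈ b, prA u = 0)
    -- the maps induced on exterior squares
    (φt : ↥(⋀[𝕂]^2 n) →ₗ[𝕂] n)
    (hφt : ∀ x y : n, φt (wedge2 𝕂 x y) = ⁅x, y⁆)
    (φ0t : ↥(⋀[𝕂]^2 ↥b) →ₗ[𝕂] ↥b)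
    (hφ0t : ∀ u v : ↥b, φ0t (wedge2 𝕂 u v) = prB ⁅(u : n), (v : n)⁆)
    (ψt : ↥(⋀[𝕂]^2 ↥b) →ₗ[𝕂] ↥a)
    (hψt : ∀ u v : ↥b, ψt (wedge2 𝕂 u v) = prA ⁅(u : n), (v : n)⁆)
    -- the canonical embedding `j : Λ²b → Λ²n`
    (j : ↥(⋀[𝕂]^2 ↥b) →ₗ[𝕂] ↥(⋀[𝕂]^2 n))
    (hj : ∀ u v : ↥b, j (wedge2 𝕂 u v) = wedge2 𝕂 (u : n) (v : n))
    -- the induced torus actions on the exterior squares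
    (D2n : ι → Module.End 𝕂 ↥(⋀[𝕂]^2 n))
    (hD2n : ∀ i, ∀ x y : n,
      D2n i (wedge2 𝕂 x y) = wedge2 𝕂 (δ i x) y + wedge2 𝕂 x (δ i y))
    (D2b : ι → Module.End 𝕂 ↥(⋀[𝕂]^2 ↥b))
    (hD2b : ∀ i, ∀ u v : ↥b,
      D2b i (wedge2 𝕂 u v) =
        wedge2 𝕂 ((δ i).restrict (hbst i) u) v + wedge2 𝕂 u ((δ i).restrict (hbst i) v)) :
    (⨅ i, Module.End.eigenspace (D2n i) (β i)) ⊓ LinearMap.ker φt =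
      Submodule.map j
        ((⨅ i, Module.End.eigenspace (D2b i) (β i)) ⊓ LinearMap.ker φ0t ⊓
          LinearMap.ker ψt) :=
  weight_space_ker_bracket_eq_general δ a hdim hast β hweight b hcompl hbst hnozero prB hprB1 hprB0
    prA hprA1 hprA0 φt hφt φ0t hφ0t ψt hψt j hj D2n hD2n D2b hD2b
end

section
/- Consider the four-dimensional initialization with distinct torus weights α₁, α₂, α₃, α₄ and the weight set π = {α_i} ∪ {α_i + α_j : (i,j) ≠ (1,4)} ∪ {α_i+α_j+α_k : (i,j,k) ≠ (2,3,4)} ∪ {α₁+α₂+α₃+α₄}. Impose the normalizations X_{α,β} = 1 for (α,β) in the admissible set A₄ described in the paper. Then the scheme of T-invariant Lie laws in the resulting slice is cut out by the single equation u·v = 0 in the two remaining essential parameters u = X_{α₁, α₂+α₃} and v = X_{α₄, α₁+α₂+α₃}; i.e. the slice is isomorphic to Spec(𝕂[u,v]/(uv)). -/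
/-! Statement 18: the slice of the scheme of `T`-invariant Lie laws for the four-dimensional
initialization is cut out by the single equation `u · v = 0`; i.e. the slice is
`Spec 𝕂[u,v]/(uv)` — formalized here at the level of points: the two essential parameters
`u = X_{α₁,α₂+α₃}` and `v = X_{α₄,α₁+α₂+α₃}` give a bijection of the slice with
`{(u,v) : uv = 0}`. -/

open scoped BigOperators

/-- The four torus weights `α₁, …, α₄`, realized as the standard basis of `ℤ⁴`. -/
def wt (i : Fin 4) : Fin 4 → ℤ := Pi.single i 1

/-- The weight set `π` of the paper:
`{α_i} ∪ {α_i+α_j : (i,j) ≠ (1,4)} ∪ {α_i+α_j+α_k : (i,j,k) ≠ (2,3,4)} ∪ {α₁+α₂+α₃+α₄}`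
(with 0-based indices). -/
def piSet : Set (Fin 4 → ℤ) :=
  {w | (∃ i, w = wt i) ∨
    (∃ i j, i < j ∧ ¬(i = 0 ∧ j = 3) ∧ w = wt i + wt j) ∨
    (∃ i j k, i < j ∧ j < k ∧ ¬(i = 1 ∧ j = 2 ∧ k = 3) ∧ w = wt i + wt j + wt k) ∨
    w = wt 0 + wt 1 + wt 2 + wt 3}

/-- The admissible set `A₄` of normalized coordinates. -/
def A4 : Set ((Fin 4 → ℤ) × (Fin 4 → ℤ)) :=
  {(wt 0, wt 1), (wt 0, wt 2), (wt 1, wt 2), (wt 1, wt 3), (wt 2, wt 3),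
    (wt 3, wt 0 + wt 2), (wt 3, wt 0 + wt 1), (wt 2, wt 0 + wt 1),
    (wt 1, wt 0 + wt 2 + wt 3)}

/-- A point of the slice: a `T`-invariant Lie law with coordinates `X_{α,β}` indexed by pairs
of weights, satisfying the Jacobi relations and the normalizations `X_{α,β} = 1` on `A₄`. -/
def IsSliceLaw {𝕂 : Type*} [Field 𝕂] (X : (Fin 4 → ℤ) → (Fin 4 → ℤ) → 𝕂) : Prop :=
  (∀ a b, (a ∉ piSet ∨ b ∉ piSet ∨ a + b ∉ piSet) → X a b = 0) ∧
  (∀ a b, X a b = - X b a) ∧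
  (∀ a b c, a ∈ piSet → b ∈ piSet → c ∈ piSet → a + b + c ∈ piSet →
      X a b * X (a + b) c + X b c * X (b + c) a + X c a * X (c + a) b = 0) ∧
  (∀ p ∈ A4, X p.1 p.2 = 1)

/-!
Seven Jacobi relations determine every structure constant outside `A₄` in terms of
`u = X_{α₁,α₂+α₃}` and `v = X_{α₄,α₁+α₂+α₃}`; the one for `(α₁, α₂+α₃, α₄)` reads `uv = 0`.
Conversely, once `uv = 0`, the resulting table of structure constants satisfies every Jacobi
relation: each relation is a polynomial of degree two in `u, v` whose coefficients, apart from
that of `uv`, vanish, which is a finite computation over the integers.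
-/

-- Coordinatewise comparison: the kernel evaluates this much faster than the generic instance
-- for functions on a `Fintype`, which matters for the `decide` computations below.
instance : DecidableEq (Fin 4 → ℤ) := fun v w =>
  decidable_of_iff (v 0 = w 0 ∧ v 1 = w 1 ∧ v 2 = w 2 ∧ v 3 = w 3) <| by
    refine ⟨fun ⟨h0, h1, h2, h3⟩ => funext fun i => ?_, fun h => by simp [h]⟩
    fin_cases i <;> assumption

def piList : List (Fin 4 → ℤ) :=
  [wt 0, wt 1, wt 2, wt 3, wt 0 + wt 1, wt 0 + wt 2, wt 1 + wt 2, wt 1 + wt 3, wt 2 + wt 3,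
    wt 0 + wt 1 + wt 2, wt 0 + wt 1 + wt 3, wt 0 + wt 2 + wt 3, wt 0 + wt 1 + wt 2 + wt 3]

theorem mem_piSet_iff {w : Fin 4 → ℤ} : w ∈ piSet ↔ w ∈ piList := by
  constructor
  · rintro (⟨i, rfl⟩ | ⟨i, j, hij, hne, rfl⟩ | ⟨i, j, k, hij, hjk, hne, rfl⟩ | rfl)
    · fin_cases i <;> decide
    · fin_cases i <;> fin_cases j <;> revert hij hne <;> decide
    · fin_cases i <;> fin_cases j <;> fin_cases k <;> revert hij hjk hne <;> decide
    · decide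
  · revert w
    simp only [piSet, Set.mem_ofPred_eq]
    decide

instance (w : Fin 4 → ℤ) : Decidable (w ∈ piSet) := decidable_of_iff _ mem_piSet_iff.symm

/-- An entry `(a, b, (c, p, q))` prescribes `X_{a,b} = c + p u + q v`; the constants `X_{b,a}`
follow by antisymmetry, and all others vanish. -/
def lawTable : List ((Fin 4 → ℤ) × (Fin 4 → ℤ) × (ℤ × ℤ × ℤ)) :=
  [(wt 0, wt 1, (1, 0, 0)), (wt 0, wt 2, (1, 0, 0)), (wt 1, wt 2, (1, 0, 0)),
    (wt 1, wt 3, (1, 0, 0)), (wt 2, wt 3, (1, 0, 0)), (wt 3, wt 0 + wt 2, (1, 0, 0)),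
    (wt 3, wt 0 + wt 1, (1, 0, 0)), (wt 2, wt 0 + wt 1, (1, 0, 0)),
    (wt 1, wt 0 + wt 2 + wt 3, (1, 0, 0)),
    (wt 0, wt 1 + wt 2, (0, 1, 0)), (wt 3, wt 0 + wt 1 + wt 2, (0, 0, 1)),
    (wt 1, wt 0 + wt 2, (1, 1, 0)), (wt 0, wt 1 + wt 3, (-1, 0, 0)),
    (wt 0, wt 2 + wt 3, (-1, 0, 0)), (wt 0 + wt 1, wt 2 + wt 3, (1, 0, 0)),
    (wt 0 + wt 2, wt 1 + wt 3, (-1, 0, 1)), (wt 2, wt 0 + wt 1 + wt 3, (-1, 0, 1))]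

def lawTableLookup (a b : Fin 4 → ℤ) : ℤ × ℤ × ℤ :=
  (lawTable.map fun e => if e.1 = a ∧ e.2.1 = b then e.2.2 else 0).sum

def lawCoeff (a b : Fin 4 → ℤ) : ℤ × ℤ × ℤ := lawTableLookup a b - lawTableLookup b a

theorem lawCoeff_swap (a b : Fin 4 → ℤ) : lawCoeff b a = -lawCoeff a b :=
  (neg_sub _ _).symm

theorem lawTableLookup_eq_zero {a b : Fin 4 → ℤ}
    (h : ¬(a ∈ piSet ∧ b ∈ piSet ∧ a + b ∈ piSet)) : lawTableLookup a b = 0 := by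
  have hsupp : ∀ e ∈ lawTable, e.1 ∈ piSet ∧ e.2.1 ∈ piSet ∧ e.1 + e.2.1 ∈ piSet := by decide
  refine List.sum_eq_zero fun x hx => ?_
  obtain ⟨e, he, rfl⟩ := List.mem_map.1 hx
  rw [if_neg]
  rintro ⟨rfl, rfl⟩
  exact h (hsupp e he)

theorem lawCoeff_eq_zero {a b : Fin 4 → ℤ} (h : ¬(a ∈ piSet ∧ b ∈ piSet ∧ a + b ∈ piSet)) :
    lawCoeff a b = 0 := by
  rw [lawCoeff, lawTableLookup_eq_zero h, lawTableLookup_eq_zero, sub_zero]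
  exact fun ⟨hb, ha, hba⟩ => h ⟨ha, hb, add_comm b a ▸ hba⟩

theorem lawCoeff_of_mem_lawTable :
    ∀ e ∈ lawTable, lawCoeff e.1 e.2.1 = e.2.2 := by
  decide

theorem exists_mem_lawTable {a b : Fin 4 → ℤ} (ha : a ∈ piSet) (hb : b ∈ piSet)
    (hab : a + b ∈ piSet) : ∃ e ∈ lawTable, (e.1 = a ∧ e.2.1 = b) ∨ (e.1 = b ∧ e.2.1 = a) := by
  have key : ∀ a ∈ piList, ∀ b ∈ piList, a + b ∈ piList →
      ∃ e ∈ lawTable, (e.1 = a ∧ e.2.1 = b) ∨ (e.1 = b ∧ e.2.1 = a) := by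
    decide
  rw [mem_piSet_iff] at ha hb hab
  exact key a ha b hb hab

/-- The product of `c + p u + q v` and `c' + p' u + q' v` modulo `uv`, in the coordinates
`1, u, v, u², v²`. -/
def mulAffine (x y : ℤ × ℤ × ℤ) : ℤ × ℤ × ℤ × ℤ × ℤ :=
  (x.1 * y.1, x.1 * y.2.1 + x.2.1 * y.1, x.1 * y.2.2 + x.2.2 * y.1, x.2.1 * y.2.1, x.2.2 * y.2.2)

theorem lawCoeff_jacobi : ∀ a ∈ piList, ∀ b ∈ piList, ∀ c ∈ piList, a + b + c ∈ piList →
    mulAffine (lawCoeff a b) (lawCoeff (a + b) c) + mulAffine (lawCoeff b c) (lawCoeff (b + c) a)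
      + mulAffine (lawCoeff c a) (lawCoeff (c + a) b) = 0 := by
  decide +kernel

section Affine

variable {R : Type*} [CommRing R] (u v : R)

def evalAffine (x : ℤ × ℤ × ℤ) : R := x.1 + x.2.1 * u + x.2.2 * v

def evalQuad (x : ℤ × ℤ × ℤ × ℤ × ℤ) : R :=
  x.1 + x.2.1 * u + x.2.2.1 * v + x.2.2.2.1 * u ^ 2 + x.2.2.2.2 * v ^ 2

theorem evalAffine_zero : evalAffine u v 0 = 0 := by
  simp [evalAffine]

theorem evalAffine_neg (x : ℤ × ℤ × ℤ) : evalAffine u v (-x) = -evalAffine u v x := by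
  simp only [evalAffine, Prod.fst_neg, Prod.snd_neg, Int.cast_neg]
  ring

theorem evalQuad_zero : evalQuad u v 0 = 0 := by
  simp [evalQuad]

theorem evalQuad_add (x y : ℤ × ℤ × ℤ × ℤ × ℤ) :
    evalQuad u v (x + y) = evalQuad u v x + evalQuad u v y := by
  simp only [evalQuad, Prod.fst_add, Prod.snd_add, Int.cast_add]
  ring

theorem evalAffine_mul_evalAffine {u v : R} (huv : u * v = 0) (x y : ℤ × ℤ × ℤ) :
    evalAffine u v x * evalAffine u v y = evalQuad u v (mulAffine x y) := by
  simp only [evalAffine, evalQuad, mulAffine, Int.cast_add, Int.cast_mul]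
  linear_combination ((x.2.1 : R) * y.2.2 + x.2.2 * y.2.1) * huv

end Affine

section CanonicalLaw

variable {R : Type*} [CommRing R] (u v : R)

def canonicalLaw (a b : Fin 4 → ℤ) : R :=
  evalAffine u v (lawCoeff a b)

theorem canonicalLaw_of_mem_lawTable {e : (Fin 4 → ℤ) × (Fin 4 → ℤ) × (ℤ × ℤ × ℤ)}
    (he : e ∈ lawTable) :
    canonicalLaw u v e.1 e.2.1 = evalAffine u v e.2.2 := by
  rw [canonicalLaw, lawCoeff_of_mem_lawTable e he]

theorem canonicalLaw_swap (a b : Fin 4 → ℤ) :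
    canonicalLaw u v b a = -canonicalLaw u v a b := by
  rw [canonicalLaw, canonicalLaw, lawCoeff_swap, evalAffine_neg]

theorem canonicalLaw_eq_zero {a b : Fin 4 → ℤ}
    (h : ¬(a ∈ piSet ∧ b ∈ piSet ∧ a + b ∈ piSet)) : canonicalLaw u v a b = 0 := by
  rw [canonicalLaw, lawCoeff_eq_zero h, evalAffine_zero]

theorem canonicalLaw_apply_0_12 :
    canonicalLaw u v (wt 0) (wt 1 + wt 2) = u := by
  rw [canonicalLaw_of_mem_lawTable u v (e := (wt 0, wt 1 + wt 2, (0, 1, 0))) (by decide)]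
  simp [evalAffine]

theorem canonicalLaw_apply_3_012 :
    canonicalLaw u v (wt 3) (wt 0 + wt 1 + wt 2) = v := by
  rw [canonicalLaw_of_mem_lawTable u v (e := (wt 3, wt 0 + wt 1 + wt 2, (0, 0, 1))) (by decide)]
  simp [evalAffine]

end CanonicalLaw

theorem isSliceLaw_canonicalLaw {𝕂 : Type*} [Field 𝕂] {u v : 𝕂} (huv : u * v = 0) :
    IsSliceLaw (canonicalLaw u v) := by
  refine ⟨fun a b h => ?_, fun a b => ?_, fun a b c ha hb hc habc => ?_, ?_⟩
  · exact canonicalLaw_eq_zero u v (by tauto)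
  · exact canonicalLaw_swap u v b a
  · rw [mem_piSet_iff] at ha hb hc habc
    simp only [canonicalLaw, evalAffine_mul_evalAffine huv, ← evalQuad_add]
    rw [lawCoeff_jacobi a ha b hb c hc habc, evalQuad_zero]
  · have hA4 : ∀ p ∈ A4, (p.1, p.2, ((1, 0, 0) : ℤ × ℤ × ℤ)) ∈ lawTable := by
      simp only [A4, Set.mem_insert_iff, Set.mem_singleton_iff]
      rintro p (rfl | rfl | rfl | rfl | rfl | rfl | rfl | rfl | rfl) <;> decide
    intro p hp
    rw [canonicalLaw_of_mem_lawTable u v (hA4 p hp)]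
    simp [evalAffine]

namespace IsSliceLaw

variable {𝕂 : Type*} [Field 𝕂] {X : (Fin 4 → ℤ) → (Fin 4 → ℤ) → 𝕂} (hX : IsSliceLaw X)
include hX

theorem apply_eq_zero_of_add_not_mem {a b : Fin 4 → ℤ} (h : a + b ∉ piSet := by decide) :
    X a b = 0 :=
  hX.1 a b (Or.inr (Or.inr h))

theorem apply_swap (a b : Fin 4 → ℤ) : X a b = -X b a :=
  hX.2.1 a b

theorem jacobi (a b c : Fin 4 → ℤ) (ha : a ∈ piSet := by decide) (hb : b ∈ piSet := by decide)
    (hc : c ∈ piSet := by decide) (habc : a + b + c ∈ piSet := by decide) :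
    X a b * X (a + b) c + X b c * X (b + c) a + X c a * X (c + a) b = 0 :=
  hX.2.2.1 a b c ha hb hc habc

theorem apply_eq_one (a b : Fin 4 → ℤ) (h : (a, b) ∈ A4 := by simp [A4]) : X a b = 1 :=
  hX.2.2.2 (a, b) h

theorem mul_eq_zero : X (wt 0) (wt 1 + wt 2) * X (wt 3) (wt 0 + wt 1 + wt 2) = 0 := by
  have J := hX.jacobi (wt 0) (wt 1 + wt 2) (wt 3)
  rw [← add_assoc, hX.apply_eq_zero_of_add_not_mem (a := wt 1 + wt 2) (b := wt 3),
    hX.apply_eq_zero_of_add_not_mem (a := wt 3) (b := wt 0),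
    hX.apply_swap (wt 0 + wt 1 + wt 2)] at J
  linear_combination -J

theorem apply_1_02 : X (wt 1) (wt 0 + wt 2) = X (wt 0) (wt 1 + wt 2) + 1 := by
  have J := hX.jacobi (wt 0) (wt 1) (wt 2)
  rw [add_comm (wt 2) (wt 0), hX.apply_swap (wt 0 + wt 1), hX.apply_swap (wt 1 + wt 2),
    hX.apply_swap (wt 2) (wt 0), hX.apply_swap (wt 0 + wt 2), hX.apply_eq_one (wt 0) (wt 1),
    hX.apply_eq_one (wt 2) (wt 0 + wt 1), hX.apply_eq_one (wt 1) (wt 2),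
    hX.apply_eq_one (wt 0) (wt 2)] at J
  linear_combination J

theorem apply_0_13 : X (wt 0) (wt 1 + wt 3) = -1 := by
  have J := hX.jacobi (wt 0) (wt 1) (wt 3)
  rw [hX.apply_swap (wt 0 + wt 1), hX.apply_swap (wt 1 + wt 3),
    hX.apply_eq_zero_of_add_not_mem (a := wt 3) (b := wt 0), hX.apply_eq_one (wt 0) (wt 1),
    hX.apply_eq_one (wt 3) (wt 0 + wt 1), hX.apply_eq_one (wt 1) (wt 3)] at J
  linear_combination -J

theorem apply_0_23 : X (wt 0) (wt 2 + wt 3) = -1 := by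
  have J := hX.jacobi (wt 0) (wt 2) (wt 3)
  rw [hX.apply_swap (wt 0 + wt 2), hX.apply_swap (wt 2 + wt 3),
    hX.apply_eq_zero_of_add_not_mem (a := wt 3) (b := wt 0), hX.apply_eq_one (wt 0) (wt 2),
    hX.apply_eq_one (wt 3) (wt 0 + wt 2), hX.apply_eq_one (wt 2) (wt 3)] at J
  linear_combination -J

theorem apply_01_23 : X (wt 0 + wt 1) (wt 2 + wt 3) = 1 := by
  have J := hX.jacobi (wt 0) (wt 1) (wt 2 + wt 3)
  rw [show wt 2 + wt 3 + wt 0 = wt 0 + wt 2 + wt 3 by abel,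
    hX.apply_eq_zero_of_add_not_mem (a := wt 1) (b := wt 2 + wt 3),
    hX.apply_swap (wt 2 + wt 3),
    hX.apply_swap (wt 0 + wt 2 + wt 3), hX.apply_0_23, hX.apply_eq_one (wt 0) (wt 1),
    hX.apply_eq_one (wt 1) (wt 0 + wt 2 + wt 3)] at J
  linear_combination J

theorem apply_02_13 : X (wt 0 + wt 2) (wt 1 + wt 3) = X (wt 3) (wt 0 + wt 1 + wt 2) - 1 := by
  have J := hX.jacobi (wt 1) (wt 3) (wt 0 + wt 2)
  rw [show wt 3 + (wt 0 + wt 2) = wt 0 + wt 2 + wt 3 by abel,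
    show wt 0 + wt 2 + wt 1 = wt 0 + wt 1 + wt 2 by abel, hX.apply_swap (wt 1 + wt 3),
    hX.apply_swap (wt 0 + wt 2 + wt 3), hX.apply_swap (wt 0 + wt 2) (wt 1),
    hX.apply_swap (wt 0 + wt 1 + wt 2), hX.apply_1_02, hX.apply_eq_one (wt 1) (wt 3),
    hX.apply_eq_one (wt 3) (wt 0 + wt 2), hX.apply_eq_one (wt 1) (wt 0 + wt 2 + wt 3)] at J
  linear_combination -J + hX.mul_eq_zero

theorem apply_2_013 : X (wt 2) (wt 0 + wt 1 + wt 3) = X (wt 3) (wt 0 + wt 1 + wt 2) - 1 := by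
  have J := hX.jacobi (wt 0) (wt 2) (wt 1 + wt 3)
  rw [show wt 1 + wt 3 + wt 0 = wt 0 + wt 1 + wt 3 by abel,
    hX.apply_eq_zero_of_add_not_mem (a := wt 2) (b := wt 1 + wt 3),
    hX.apply_swap (wt 1 + wt 3),
    hX.apply_swap (wt 0 + wt 1 + wt 3), hX.apply_02_13, hX.apply_0_13,
    hX.apply_eq_one (wt 0) (wt 2)] at J
  linear_combination -J

theorem apply_of_mem_lawTable : ∀ e ∈ lawTable,
    X e.1 e.2.1 = evalAffine (X (wt 0) (wt 1 + wt 2)) (X (wt 3) (wt 0 + wt 1 + wt 2)) e.2.2 := by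
  simp only [lawTable, List.forall_mem_cons, List.not_mem_nil, IsEmpty.forall_iff,
    implies_true, and_true]
  rw [hX.apply_eq_one (wt 0) (wt 1), hX.apply_eq_one (wt 0) (wt 2), hX.apply_eq_one (wt 1) (wt 2),
    hX.apply_eq_one (wt 1) (wt 3), hX.apply_eq_one (wt 2) (wt 3),
    hX.apply_eq_one (wt 3) (wt 0 + wt 2), hX.apply_eq_one (wt 3) (wt 0 + wt 1),
    hX.apply_eq_one (wt 2) (wt 0 + wt 1), hX.apply_eq_one (wt 1) (wt 0 + wt 2 + wt 3),
    hX.apply_1_02, hX.apply_0_13, hX.apply_0_23, hX.apply_01_23, hX.apply_02_13, hX.apply_2_013]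
  simp only [evalAffine, Int.cast_zero, Int.cast_one, Int.cast_neg]
  refine ⟨?_, ?_, ?_, ?_, ?_, ?_, ?_, ?_, ?_, ?_, ?_, ?_, ?_, ?_, ?_, ?_, ?_⟩ <;> ring

theorem eq_canonicalLaw :
    X = canonicalLaw (X (wt 0) (wt 1 + wt 2)) (X (wt 3) (wt 0 + wt 1 + wt 2)) := by
  funext a b
  by_cases h : a ∈ piSet ∧ b ∈ piSet ∧ a + b ∈ piSet
  · obtain ⟨e, he, ⟨rfl, rfl⟩ | ⟨rfl, rfl⟩⟩ := exists_mem_lawTable h.1 h.2.1 h.2.2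
    · rw [hX.apply_of_mem_lawTable e he, canonicalLaw_of_mem_lawTable _ _ he]
    · rw [hX.apply_swap, canonicalLaw_swap, hX.apply_of_mem_lawTable e he,
        canonicalLaw_of_mem_lawTable _ _ he]
  · rw [hX.1 a b (by tauto), canonicalLaw_eq_zero _ _ h]

end IsSliceLaw

theorem slice_isomorphic_to_uv_zero_general
    {𝕂 : Type*} [Field 𝕂] :
    (∀ X : (Fin 4 → ℤ) → (Fin 4 → ℤ) → 𝕂, IsSliceLaw X →
        X (wt 0) (wt 1 + wt 2) * X (wt 3) (wt 0 + wt 1 + wt 2) = 0) ∧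
    (∀ u v : 𝕂, u * v = 0 →
        ∃! X : (Fin 4 → ℤ) → (Fin 4 → ℤ) → 𝕂,
          IsSliceLaw X ∧ X (wt 0) (wt 1 + wt 2) = u ∧
            X (wt 3) (wt 0 + wt 1 + wt 2) = v) := by
  refine ⟨fun X hX => hX.mul_eq_zero, fun u v huv => ⟨canonicalLaw u v, ?_, ?_⟩⟩
  · exact ⟨isSliceLaw_canonicalLaw huv, canonicalLaw_apply_0_12 u v, canonicalLaw_apply_3_012 u v⟩
  · rintro X ⟨hX, rfl, rfl⟩
    exact hX.eq_canonicalLaw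

/-- The slice is isomorphic to `Spec 𝕂[u,v]/(uv)`: the remaining essential
parameters `u = X_{α₁,α₂+α₃}` and `v = X_{α₄,α₁+α₂+α₃}` satisfy `u·v = 0`, and every pair
`(u,v)` with `u·v = 0` arises from a unique point of the slice. -/
theorem slice_isomorphic_to_uv_zero
    {𝕂 : Type*} [Field 𝕂] [CharZero 𝕂] :
    (∀ X : (Fin 4 → ℤ) → (Fin 4 → ℤ) → 𝕂, IsSliceLaw X →
        X (wt 0) (wt 1 + wt 2) * X (wt 3) (wt 0 + wt 1 + wt 2) = 0) ∧
    (∀ u v : 𝕂, u * v = 0 →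
        ∃! X : (Fin 4 → ℤ) → (Fin 4 → ℤ) → 𝕂,
          IsSliceLaw X ∧ X (wt 0) (wt 1 + wt 2) = u ∧
            X (wt 3) (wt 0 + wt 1 + wt 2) = v) :=
  slice_isomorphic_to_uv_zero_general
end
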